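/- arXiv:1812.08993 — 5 statements merged into one kernel-verified Lean document; each statement's English description precedes it below -/
import Mathlib

section
/- Let q be a prime power, G a subgroup of F_q^* of order r, and V an F_q-subspace of F_{q^m} of dimension t. Define φ(x) = ∏_{g ∈ G} ∏_{β ∈ V} (x + g + β). Then for any fixed γ ∈ F_{q^m}, φ is constant on the set ⋃_{g ∈ G} (γ·g + V); that is, for any α ∈ G and v ∈ V, φ(γ·α + v) = φ(γ). -/
/-!
Both invariances, `φ(x + v) = φ(x)` for `v ∈ V` and `φ(x α) = φ(x)` for `α ∈ G`, come from
reindexing the product defining `φ`. A translation by `v` is absorbed by `β ↦ β - v`. A dilation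
by `α` is absorbed by `g ↦ g α` and `β ↦ α β` (a bijection of `V` because `α ∈ F_q^*`), which
pulls out the factor `α ^ (|G| |V|) = 1`.
-/

open Polynomial Finset
open scoped Classical

noncomputable def phiPoly {Fq K : Type*} [Field Fq] [Field K] [Fintype K] [Algebra Fq K]
    (G : Subgroup Kˣ) (V : Submodule Fq K) : Polynomial K :=
  ∏ g : G, ∏ β : V, (X + C ((g : Kˣ) : K) + C (β : K))

namespace phiPoly

variable {Fq K : Type*} [Field Fq] [Field K] [Fintype K] [Algebra Fq K]
  (G : Subgroup Kˣ) (V : Submodule Fq K)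

theorem eval_eq (x : K) :
    (phiPoly G V).eval x = ∏ g : G, ∏ β : V, (x + ((g : Kˣ) : K) + (β : K)) := by
  simp only [phiPoly, eval_prod, eval_add, eval_X, eval_C]

theorem eval_add_coe (x : K) (v : V) :
    (phiPoly G V).eval (x + (v : K)) = (phiPoly G V).eval x := by
  simp only [eval_eq]
  refine prod_congr rfl fun g _ => Fintype.prod_equiv (Equiv.addLeft v) _ _ fun β => ?_
  simp only [Equiv.coe_addLeft, Submodule.coe_add]
  ring

theorem eval_mul_of_algebraMap_eq {a : G} {c : Fq} (hc : algebraMap Fq K c = ((a : Kˣ) : K))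
    (x : K) :
    (phiPoly G V).eval (x * ((a : Kˣ) : K)) = (phiPoly G V).eval x := by
  have hc0 : c ≠ 0 := by
    rintro rfl
    exact (a : Kˣ).ne_zero (by simpa using hc.symm)
  set α : K := ((a : Kˣ) : K)
  have hpow : α ^ Fintype.card G = 1 := by
    rw [← Units.val_pow_eq_pow_val, ← Subgroup.coe_pow, pow_card_eq_one]
    rfl
  let scale : V ≃ V := (LinearEquiv.smulOfNeZero Fq V c hc0).toEquiv
  simp only [eval_eq]
  calc ∏ g : G, ∏ β : V, (x * α + ((g : Kˣ) : K) + (β : K))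
      = ∏ g : G, ∏ β : V, (x * α + (((g * a : G) : Kˣ) : K) + (scale β : K)) :=
        (Fintype.prod_equiv (Equiv.mulRight a) _ _ fun g =>
          Fintype.prod_equiv scale _ (fun β => x * α + (((g * a : G) : Kˣ) : K) + (β : K))
            fun _ => rfl).symm
    _ = ∏ g : G, ∏ β : V, α * (x + ((g : Kˣ) : K) + (β : K)) := by
        refine prod_congr rfl fun g _ => prod_congr rfl fun β _ => ?_
        simp only [scale, Subgroup.coe_mul, Units.val_mul, LinearEquiv.coe_toEquiv,
          LinearEquiv.smulOfNeZero_apply, SetLike.val_smul, Algebra.smul_def, hc]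
        ring
    _ = (α ^ Fintype.card G) ^ Fintype.card V *
          ∏ g : G, ∏ β : V, (x + ((g : Kˣ) : K) + (β : K)) := by
        simp only [prod_mul_distrib, prod_const, card_univ, ← pow_mul, mul_comm]
    _ = ∏ g : G, ∏ β : V, (x + ((g : Kˣ) : K) + (β : K)) := by
        rw [hpow, one_pow, one_mul]

end phiPoly

theorem stmt1_general (Fq K : Type*) [Field Fq] [Field K] [Fintype K] [Algebra Fq K]
    (V : Submodule Fq K) (G : Subgroup Kˣ)
    (hGsub : ∀ g : G, ∃ a : Fq, algebraMap Fq K a = ((g : Kˣ) : K))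
    (γ : K) (a : G) (v : V) :
    (phiPoly G V).eval (γ * ((a : Kˣ) : K) + (v : K)) = (phiPoly G V).eval γ := by
  obtain ⟨c, hc⟩ := hGsub a
  rw [phiPoly.eval_add_coe, phiPoly.eval_mul_of_algebraMap_eq G V hc]

/-- `φ` is constant on `⋃_{g ∈ G} (γ g + V)`:
for `α ∈ G` and `v ∈ V`, `φ(γ α + v) = φ(γ)`. -/
theorem stmt1 (q r m t : ℕ) (hq : IsPrimePow q) (hr : r ∣ q - 1)
    (Fq K : Type*) [Field Fq] [Fintype Fq] [Field K] [Fintype K] [Algebra Fq K]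
    (hcq : Fintype.card Fq = q) (hcK : Fintype.card K = q ^ m)
    (V : Submodule Fq K) (hV : Module.finrank Fq V = t)
    (G : Subgroup Kˣ) (hG : Nat.card G = r)
    (hGsub : ∀ g : G, ∃ a : Fq, algebraMap Fq K a = ((g : Kˣ) : K))
    (γ : K) (a : G) (v : V) :
    (phiPoly G V).eval (γ * ((a : Kˣ) : K) + (v : K)) = (phiPoly G V).eval γ :=
  stmt1_general Fq K V G hGsub γ a v
end

section
/- With notation as above (φ(x) = ∏_{g ∈ G} ∏_{β ∈ V} (x + g + β), and α_1 = 0, α_2, ..., α_ℓ chosen so that V and {α_i g + V : 2 ≤ i ≤ ℓ, g ∈ G} are pairwise distinct cosets of V): if 1 ≤ i ≠ j ≤ ℓ, then φ(α) ≠ φ(β) for every α ∈ ⋃_{g ∈ G}(α_i g + V) and every β ∈ ⋃_{g ∈ G}(α_j g + V). -/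
/-!
`φ` is invariant under translation by `V` and under multiplication by `G ⊆ F_q^*` (which
permutes `G` and, by `F_q`-linearity, `V`), so it is constant on each union
`U_k = ⋃_g (α_k g + V)`. For `k ≠ 0` the union `U_k` consists of `|G|` disjoint cosets, so if
`φ` took the same value `c` on `U_i` and `U_j`, then `φ - c`, of degree `|G| |V|`, would have at
least `|V| + |G| |V|` roots.
-/

open Polynomial Finset
open scoped Classical

/-- The (additive) coset `a + V` of a set `V`. -/
def coset {K : Type*} [Add K] (V : Set K) (a : K) : Set K := {x | ∃ v ∈ V, x = a + v}

section Coset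

variable {R K : Type*} [Ring R] [AddCommGroup K] [Module R K] (V : Submodule R K)

theorem coset_eq_image (x : K) : coset (V : Set K) x = (x + ·) '' (V : Set K) := by
  ext z
  simp only [coset, Set.mem_ofPred_eq, Set.mem_image, SetLike.mem_coe, eq_comm]

theorem mem_coset_self (x : K) : x ∈ coset (V : Set K) x := ⟨0, V.zero_mem, (add_zero x).symm⟩

theorem coset_eq_of_mem_of_mem {x y z : K} (hx : z ∈ coset (V : Set K) x)
    (hy : z ∈ coset (V : Set K) y) : coset (V : Set K) x = coset (V : Set K) y := by
  obtain ⟨v, hv, rfl⟩ := hx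
  obtain ⟨w, hw, hz⟩ := hy
  obtain rfl : y = x + (v - w) := by rw [← add_sub_assoc, hz]; abel
  ext u
  constructor
  · rintro ⟨u', hu', rfl⟩
    exact ⟨w - v + u', V.add_mem (V.sub_mem hw hv) hu', by abel⟩
  · rintro ⟨u', hu', rfl⟩
    exact ⟨v - w + u', V.add_mem (V.sub_mem hv hw) hu', by abel⟩

theorem disjoint_coset_of_ne {x y : K} (h : coset (V : Set K) x ≠ coset (V : Set K) y) :
    Disjoint (coset (V : Set K) x) (coset (V : Set K) y) :=
  Set.disjoint_left.2 fun _ hx hy => h (coset_eq_of_mem_of_mem V hx hy)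

theorem card_toFinset_coset [Fintype K] (x : K) :
    #(coset (V : Set K) x).toFinset = Fintype.card V := by
  rw [← Set.ncard_eq_toFinset_card', coset_eq_image,
    Set.ncard_image_of_injective _ (add_right_injective x), ← Nat.card_coe_set_eq,
    Nat.card_eq_fintype_card]
  rfl

theorem card_toFinset_iUnion_coset [Fintype K] {ι : Type*} [Fintype ι] {f : ι → K}
    (hf : ∀ i j, coset (V : Set K) (f i) = coset (V : Set K) (f j) → i = j) :
    #(⋃ i, coset (V : Set K) (f i)).toFinset = Fintype.card ι * Fintype.card V := by
  rw [Set.toFinset_iUnion, card_biUnion fun i _ j _ hij => ?_]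
  · rw [sum_const_nat fun i _ => by convert card_toFinset_coset V (f i), card_univ]
  · simpa using disjoint_coset_of_ne V fun h => hij (hf i j h)

end Coset

theorem Polynomial.card_le_natDegree_of_eval_eq {R : Type*} [CommRing R] [IsDomain R]
    {p : R[X]} (hp : 0 < p.natDegree) {c : R} {s : Finset R} (hs : ∀ x ∈ s, p.eval x = c) :
    #s ≤ p.natDegree := by
  have hpc : p - C c ≠ 0 := fun h => by
    rw [sub_eq_zero] at h
    simp [h] at hp
  calc #s ≤ (p - C c).natDegree := card_le_degree_of_subset_roots fun x hx => by
        rw [mem_roots hpc, IsRoot, eval_sub, eval_C, hs x hx, sub_self]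
    _ = p.natDegree := natDegree_sub_C

section Phi

variable {Fq K : Type*} [Field Fq] [Field K] [Fintype K] [Algebra Fq K]
  (G : Subgroup Kˣ) (V : Submodule Fq K)

theorem eval_phiPoly (x : K) :
    (phiPoly G V).eval x = ∏ g : G, ∏ β : V, (x + ((g : Kˣ) : K) + β) := by
  simp [phiPoly, eval_prod]

theorem natDegree_phiPoly : (phiPoly G V).natDegree = Fintype.card G * Fintype.card V := by
  have hfactor (g : G) (β : V) :
      X + C ((g : Kˣ) : K) + C (β : K) = X + C (((g : Kˣ) : K) + β) := by
    rw [C_add, add_assoc]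
  simp only [phiPoly, hfactor]
  rw [natDegree_prod _ _ fun g _ => prod_ne_zero_iff.2 fun β _ => X_add_C_ne_zero _]
  simp_rw [natDegree_prod _ _ fun β _ => X_add_C_ne_zero _, natDegree_X_add_C]
  simp [mul_comm]

theorem eval_phiPoly_add_of_mem (x : K) {v : K} (hv : v ∈ V) :
    (phiPoly G V).eval (x + v) = (phiPoly G V).eval x := by
  simp only [eval_phiPoly]
  refine Fintype.prod_congr _ _ fun g =>
    Fintype.prod_equiv (Equiv.addLeft ⟨v, hv⟩) _ _ fun β => ?_
  simp only [Equiv.coe_addLeft, Submodule.coe_add]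
  ring

variable {G} in
theorem eval_phiPoly_mul (hG : ∀ g : G, ∃ a : Fq, algebraMap Fq K a = ((g : Kˣ) : K))
    (x : K) (h : G) :
    (phiPoly G V).eval (x * ((h : Kˣ) : K)) = (phiPoly G V).eval x := by
  obtain ⟨a, ha⟩ := hG h
  have ha0 : a ≠ 0 := by
    rintro rfl
    exact (h : Kˣ).ne_zero (by simpa using ha.symm)
  have hpow : ((h : Kˣ) : K) ^ Fintype.card G = 1 := by
    rw [← Units.val_pow_eq_pow_val, ← Subgroup.coe_pow, pow_card_eq_one]
    rfl
  calc (phiPoly G V).eval (x * ((h : Kˣ) : K))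
      = ∏ g : G, ∏ β : V, (x + ((g : Kˣ) : K) + β) * ((h : Kˣ) : K) := by
        rw [eval_phiPoly]
        refine (Fintype.prod_equiv (Equiv.mulRight h) _ _ fun g =>
          Fintype.prod_equiv (MulAction.toPerm (Units.mk0 a ha0)) _ _ fun β => ?_).symm
        simp only [Equiv.coe_mulRight, MulAction.toPerm_apply, Submodule.coe_smul_of_tower,
          Units.smul_mk0, Algebra.smul_def, ha, Subgroup.coe_mul, Units.val_mul]
        ring
    _ = (phiPoly G V).eval x * (((h : Kˣ) : K) ^ Fintype.card G) ^ Fintype.card V := by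
        simp only [prod_mul_distrib, prod_const, card_univ, eval_phiPoly, ← pow_mul]
        ring
    _ = (phiPoly G V).eval x := by rw [hpow, one_pow, mul_one]

variable {G V}

theorem eval_phiPoly_of_mem_iUnion_coset
    (hG : ∀ g : G, ∃ a : Fq, algebraMap Fq K a = ((g : Kˣ) : K)) {x z : K}
    (hz : z ∈ ⋃ g : G, coset (V : Set K) (x * ((g : Kˣ) : K))) :
    (phiPoly G V).eval z = (phiPoly G V).eval x := by
  obtain ⟨g, v, hv, rfl⟩ := Set.mem_iUnion.1 hz
  rw [eval_phiPoly_add_of_mem G V _ hv, eval_phiPoly_mul V hG]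

theorem eval_phiPoly_ne_of_cosets_distinct
    (hG : ∀ g : G, ∃ a : Fq, algebraMap Fq K a = ((g : Kˣ) : K))
    {ι : Type*} {α : ι → K} {i₀ : ι} (hα₀ : α i₀ = 0)
    (hne : ∀ (i : ι) (g : G), i ≠ i₀ →
      coset (V : Set K) (α i * ((g : Kˣ) : K)) ≠ coset (V : Set K) 0)
    (hinj : ∀ (i j : ι) (gi gj : G), i ≠ i₀ → j ≠ i₀ →
      coset (V : Set K) (α i * ((gi : Kˣ) : K)) = coset (V : Set K) (α j * ((gj : Kˣ) : K)) →
      i = j ∧ gi = gj)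
    {i j : ι} (hij : i ≠ j) (hj : j ≠ i₀) :
    (phiPoly G V).eval (α i) ≠ (phiPoly G V).eval (α j) := by
  intro hφ
  set U : ι → Set K := fun k => ⋃ g : G, coset (V : Set K) (α k * ((g : Kˣ) : K))
  have hdisj : Disjoint (U i) (U j) := by
    refine Set.disjoint_iUnion_left.2 fun g => Set.disjoint_iUnion_right.2 fun g' =>
      disjoint_coset_of_ne V fun h => ?_
    by_cases hi : i = i₀
    · rw [hi, hα₀, zero_mul] at h
      exact hne j g' hj h.symm
    · exact hij (hinj i j g g' hi hj h).1
  have hcard : #(U j).toFinset = Fintype.card G * Fintype.card V :=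
    card_toFinset_iUnion_coset V fun g g' h => (hinj j j g g' hj hj h).2
  have hmem : α i ∈ U i := Set.mem_iUnion.2 ⟨1, by simpa using mem_coset_self V (α i)⟩
  have hroots := Polynomial.card_le_natDegree_of_eval_eq (p := phiPoly G V)
    (by rw [natDegree_phiPoly]; positivity) (c := (phiPoly G V).eval (α j))
    (s := (U i ∪ U j).toFinset) fun z hz => by
      rcases Set.mem_union _ _ _ |>.1 (Set.mem_toFinset.1 hz) with hz | hz
      · rw [eval_phiPoly_of_mem_iUnion_coset hG hz, hφ]
      · exact eval_phiPoly_of_mem_iUnion_coset hG hz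
  rw [Set.toFinset_union, card_union_of_disjoint (Set.disjoint_toFinset.2 hdisj), hcard,
    natDegree_phiPoly] at hroots
  have : 0 < #(U i).toFinset := card_pos.2 ⟨α i, Set.mem_toFinset.2 hmem⟩
  omega

end Phi

theorem stmt2_general (q r m t : ℕ)
    (Fq K : Type*) [Field Fq] [Field K] [Fintype K] [Algebra Fq K]
    (V : Submodule Fq K)
    (G : Subgroup Kˣ)
    (hGsub : ∀ g : G, ∃ a : Fq, algebraMap Fq K a = ((g : Kˣ) : K))
    (α : Fin ((q ^ (m - t) - 1) / r + 1) → K) (hα0 : α 0 = 0)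
    (hne : ∀ (i : Fin ((q ^ (m - t) - 1) / r + 1)) (g : G), i ≠ 0 →
      coset (V : Set K) (α i * ((g : Kˣ) : K)) ≠ coset (V : Set K) 0)
    (hinj : ∀ (i j : Fin ((q ^ (m - t) - 1) / r + 1)) (gi gj : G), i ≠ 0 → j ≠ 0 →
      coset (V : Set K) (α i * ((gi : Kˣ) : K)) = coset (V : Set K) (α j * ((gj : Kˣ) : K)) →
      i = j ∧ gi = gj)
    (i j : Fin ((q ^ (m - t) - 1) / r + 1)) (hij : i ≠ j) (a b : K)
    (ha : a ∈ ⋃ g : G, coset (V : Set K) (α i * ((g : Kˣ) : K)))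
    (hb : b ∈ ⋃ g : G, coset (V : Set K) (α j * ((g : Kˣ) : K))) :
    (phiPoly G V).eval a ≠ (phiPoly G V).eval b := by
  rw [eval_phiPoly_of_mem_iUnion_coset hGsub ha, eval_phiPoly_of_mem_iUnion_coset hGsub hb]
  rcases eq_or_ne j 0 with rfl | hj
  · exact (eval_phiPoly_ne_of_cosets_distinct hGsub hα0 hne hinj hij.symm hij).symm
  · exact eval_phiPoly_ne_of_cosets_distinct hGsub hα0 hne hinj hij hj

/-- `φ` takes distinct values on `⋃_g (α_i g + V)` and `⋃_g (α_j g + V)`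
for `i ≠ j`. -/
theorem stmt2 (q r m t : ℕ) (hq : IsPrimePow q) (hm : 1 ≤ m) (ht : t ≤ m - 1)
    (hr : r ∣ q - 1)
    (Fq K : Type*) [Field Fq] [Fintype Fq] [Field K] [Fintype K] [Algebra Fq K]
    (hcq : Fintype.card Fq = q) (hcK : Fintype.card K = q ^ m)
    (V : Submodule Fq K) (hV : Module.finrank Fq V = t)
    (G : Subgroup Kˣ) (hG : Nat.card G = r)
    (hGsub : ∀ g : G, ∃ a : Fq, algebraMap Fq K a = ((g : Kˣ) : K))
    (α : Fin ((q ^ (m - t) - 1) / r + 1) → K) (hα0 : α 0 = 0)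
    (hne : ∀ (i : Fin ((q ^ (m - t) - 1) / r + 1)) (g : G), i ≠ 0 →
      coset (V : Set K) (α i * ((g : Kˣ) : K)) ≠ coset (V : Set K) 0)
    (hinj : ∀ (i j : Fin ((q ^ (m - t) - 1) / r + 1)) (gi gj : G), i ≠ 0 → j ≠ 0 →
      coset (V : Set K) (α i * ((gi : Kˣ) : K)) = coset (V : Set K) (α j * ((gj : Kˣ) : K)) →
      i = j ∧ gi = gj)
    (hcover : (⋃ i, ⋃ g : G, coset (V : Set K) (α i * ((g : Kˣ) : K))) = Set.univ)
    (i j : Fin ((q ^ (m - t) - 1) / r + 1)) (hij : i ≠ j) (a b : K)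
    (ha : a ∈ ⋃ g : G, coset (V : Set K) (α i * ((g : Kˣ) : K)))
    (hb : b ∈ ⋃ g : G, coset (V : Set K) (α j * ((g : Kˣ) : K))) :
    (phiPoly G V).eval a ≠ (phiPoly G V).eval b :=
  stmt2_general q r m t Fq K V G hGsub α hα0 hne hinj i j hij a b ha hb
end

section
/- Let x = (x_0,...,x_{N-1}) and y = (y_0,...,y_{N-1}) be sequences over F_{q^m} defined by x_k = f(θ^k) and y_k = h(θ^k), where f, h are polynomials over F_{q^m} of degree at most d ≥ 1 with f ≠ h as polynomials, θ is a generator of F_{q^m}^*, and N = q^m - 1. Then the Hamming correlation H_{x,y}(τ) = #{0 ≤ k ≤ N-1 : x_k = y_{k+τ mod N}} is at most d for every τ. -/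
open Polynomial Finset
open scoped Classical

def hammingCorrelation {α : Type*} [DecidableEq α] (N : ℕ) (x y : ℕ → α) (τ : ℕ) : ℕ :=
  #{k ∈ range N | x k = y ((k + τ) % N)}

namespace Polynomial

variable {K : Type*}

theorem natDegree_sub_comp_C_mul_X_le [Ring K] {f h : K[X]} {d : ℕ}
    (hf : f.natDegree ≤ d) (hh : h.natDegree ≤ d) (c : K) :
    (f - h.comp (C c * X)).natDegree ≤ d := by
  refine (natDegree_sub_le _ _).trans (max_le hf ?_)
  calc (h.comp (C c * X)).natDegree ≤ h.natDegree * (C c * X).natDegree := natDegree_comp_le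
    _ ≤ d * 1 := Nat.mul_le_mul hh ((natDegree_C_mul_le c X).trans natDegree_X_le)
    _ = d := mul_one d

/-- Along the sequence `θ^k`, agreement `f(θ^k) = h(θ^(k+τ))` means that `θ^k` is a root of
`f(x) - h(θ^τ x)`, and the `θ^k` with `k < orderOf θ` are pairwise distinct. -/
theorem hammingCorrelation_le_natDegree_sub_comp [CommRing K] [IsDomain K] (θ : K)
    (f h : K[X]) (τ : ℕ) (hne : f - h.comp (C (θ ^ τ) * X) ≠ 0) :
    hammingCorrelation (orderOf θ) (fun k => f.eval (θ ^ k)) (fun k => h.eval (θ ^ k)) τ ≤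
      (f - h.comp (C (θ ^ τ) * X)).natDegree := by
  set S := {k ∈ range (orderOf θ) | f.eval (θ ^ k) = h.eval (θ ^ ((k + τ) % orderOf θ))}
  have hinj : Set.InjOn (θ ^ ·) (S : Set ℕ) := fun a ha b hb hab =>
    pow_injOn_Iio_orderOf (mem_range.1 (mem_filter.1 ha).1) (mem_range.1 (mem_filter.1 hb).1) hab
  have hroots : (S.image (θ ^ ·)).val ⊆ (f - h.comp (C (θ ^ τ) * X)).roots := by
    intro x (hx : x ∈ S.image (θ ^ ·))
    obtain ⟨k, hk, rfl⟩ := mem_image.1 hx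
    have hagree := (mem_filter.1 hk).2
    rw [pow_mod_orderOf] at hagree
    rw [mem_roots hne, IsRoot, eval_sub, eval_comp, eval_mul, eval_C, eval_X, ← pow_add,
      add_comm τ, hagree, sub_self]
  calc #S = #(S.image (θ ^ ·)) := (card_image_of_injOn hinj).symm
    _ ≤ _ := card_le_degree_of_subset_roots hroots

end Polynomial

theorem stmt6_general (q m d : ℕ) (K : Type*) [Field K] [Fintype K] (hcK : Fintype.card K = q ^ m)
    (θ : Kˣ) (hθ : ∀ x : Kˣ, x ∈ Subgroup.zpowers θ)
    (f h : Polynomial K) (hf : f.natDegree ≤ d) (hh : h.natDegree ≤ d) :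
    ∀ τ : ℕ, f - h.comp (C (((θ : Kˣ) : K) ^ τ) * X) ≠ 0 →
      ((Finset.range (q ^ m - 1)).filter (fun k =>
        f.eval (((θ : Kˣ) : K) ^ k) =
        h.eval (((θ : Kˣ) : K) ^ ((k + τ) % (q ^ m - 1))))).card ≤ d := by
  intro τ hne
  have hN : orderOf ((θ : Kˣ) : K) = q ^ m - 1 := by
    rw [orderOf_units, orderOf_eq_card_of_forall_mem_zpowers hθ, Nat.card_eq_fintype_card,
      Fintype.card_units, hcK]
  calc _ = hammingCorrelation (orderOf ((θ : Kˣ) : K)) (fun k => f.eval (((θ : Kˣ) : K) ^ k))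
          (fun k => h.eval (((θ : Kˣ) : K) ^ k)) τ := by rw [hN]; rfl
    _ ≤ (f - h.comp (C (((θ : Kˣ) : K) ^ τ) * X)).natDegree :=
        hammingCorrelation_le_natDegree_sub_comp _ f h τ hne
    _ ≤ d := natDegree_sub_comp_C_mul_X_le hf hh _

/-- Hamming correlation of two polynomial-generated sequences of
length `N = q^m - 1` is bounded by the degree bound `d`, provided
`f(x) - h(θ^τ x)` is not the zero polynomial. -/
theorem stmt6 (q m d : ℕ) (hq : IsPrimePow q) (hm : 1 ≤ m) (hd : 1 ≤ d)
    (K : Type*) [Field K] [Fintype K] (hcK : Fintype.card K = q ^ m)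
    (θ : Kˣ) (hθ : ∀ x : Kˣ, x ∈ Subgroup.zpowers θ)
    (f h : Polynomial K) (hf : f.natDegree ≤ d) (hh : h.natDegree ≤ d) (hfh : f ≠ h) :
    ∀ τ : ℕ, f - h.comp (C (((θ : Kˣ) : K) ^ τ) * X) ≠ 0 →
      ((Finset.range (q ^ m - 1)).filter (fun k =>
        f.eval (((θ : Kˣ) : K) ^ k) =
        h.eval (((θ : Kˣ) : K) ^ ((k + τ) % (q ^ m - 1))))).card ≤ d :=
  stmt6_general q m d K hcK θ hθ f h hf hh
end

section
/- Let r = 1 (so G = {1}) and t ≤ m - 1, and let V be an F_q-subspace of F_{q^m} of dimension t with coset representatives α_1 = 0, α_2, ..., α_{q^{m-t}} (so the α_i + V partition F_{q^m}). With φ(x) = ∏_{β ∈ V}(x + β) and θ a generator of F_{q^m}^*, define s_i = (φ(θ^0 + α_i), ..., φ(θ^{q^m-2} + α_i)) for 1 ≤ i ≤ q^{m-t}. Then {s_1,...,s_{q^{m-t}}} is a set of q^{m-t} sequences of length q^m - 1 over an alphabet of size q^{m-t}, with maximum Hamming correlation at most q^t. -/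
/-!
The subspace polynomial `φ = ∏_{β ∈ V} (X + β)` is monic of degree `|V|` and constant on the
cosets of `V`; counting roots of `φ - φ a` then shows `φ a = φ b ↔ a - b ∈ V`. So position `k` of
`s_i` agrees with position `k + τ` of `s_j` iff `θ^k (1 - θ^τ) ∈ α_j - α_i + V`. For `τ ≠ 0` the
map `k ↦ θ^k (1 - θ^τ)` is injective on `[0, q^m - 1)`, giving at most `|V| = q^t` agreements; for
`τ = 0`, `i ≠ j` there are none. The alphabet is `{φ (α_i)}`, since `θ^k + α_j` runs through
`K ∖ {α_j}`, which meets every coset when there are at least two of them.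
-/

open Polynomial Finset
open scoped Classical

section PrimitiveElement

variable {K : Type*} [Field K] [Fintype K] {ζ : K}

lemma IsPrimitiveRoot.exists_pow_eq_of_ne_zero (hζ : IsPrimitiveRoot ζ (Fintype.card K - 1))
    {x : K} (hx : x ≠ 0) : ∃ k < Fintype.card K - 1, ζ ^ k = x :=
  have : NeZero (Fintype.card K - 1) := ⟨by have := Fintype.one_lt_card (α := K); omega⟩
  hζ.eq_pow_of_pow_eq_one (FiniteField.pow_card_sub_one_eq_one x hx)

lemma isPrimitiveRoot_of_forall_mem_zpowers {θ : Kˣ} (hθ : ∀ x : Kˣ, x ∈ Subgroup.zpowers θ) :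
    IsPrimitiveRoot (θ : K) (Fintype.card K - 1) := by
  have := IsPrimitiveRoot.orderOf (θ : K)
  rwa [orderOf_units, orderOf_eq_card_of_forall_mem_zpowers hθ, Nat.card_eq_fintype_card,
    Fintype.card_units] at this

end PrimitiveElement

section SubspacePoly

variable {R K : Type*} [Ring R] [Field K] [Fintype K] [Module R K] (V : Submodule R K)

noncomputable abbrev subspacePoly : K[X] := ∏ β : V, (X + C (β : K))

lemma subspacePoly_natDegree : (subspacePoly V).natDegree = Fintype.card V := by
  rw [natDegree_prod_of_monic _ _ fun _ _ => monic_X_add_C _]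
  simp

variable {V}

lemma subspacePoly_eval_eq_of_sub_mem {a b : K} (h : a - b ∈ V) :
    (subspacePoly V).eval a = (subspacePoly V).eval b := by
  simp only [eval_prod, eval_add, eval_X, eval_C]
  refine Fintype.prod_equiv (Equiv.addRight ⟨a - b, h⟩) _ _ fun β => ?_
  simp only [Equiv.coe_addRight, Submodule.coe_add]
  ring

lemma subspacePoly_eval_add_of_mem (a : K) {v : K} (hv : v ∈ V) :
    (subspacePoly V).eval (a + v) = (subspacePoly V).eval a :=
  subspacePoly_eval_eq_of_sub_mem (by simpa using hv)

lemma subspacePoly_eval_eq_iff {a b : K} :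
    (subspacePoly V).eval a = (subspacePoly V).eval b ↔ a - b ∈ V := by
  refine ⟨fun h => ?_, subspacePoly_eval_eq_of_sub_mem⟩
  by_contra hab
  set p := subspacePoly V - C ((subspacePoly V).eval a)
  have hdeg : p.natDegree = Fintype.card V := by rw [natDegree_sub_C, subspacePoly_natDegree]
  have hp : p ≠ 0 := fun h0 => Fintype.card_ne_zero (by rw [← hdeg, h0, natDegree_zero])
  -- the roots of `p` include the disjoint cosets `a + V` and `b + V`
  have hinj : Function.Injective (Sum.elim (fun v : V => a + v) (fun v : V => b + v)) := by
    refine (add_right_injective a).comp Subtype.val_injective |>.sumElim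
      ((add_right_injective b).comp Subtype.val_injective) fun v w hvw => hab ?_
    simp only [Function.comp_apply] at hvw
    have : a - b = w - v := by linear_combination hvw
    exact this ▸ V.sub_mem w.2 v.2
  have hroots : (univ.map ⟨_, hinj⟩).val ⊆ p.roots := by
    intro x hx
    rw [mem_roots hp, IsRoot.def, eval_sub, eval_C, sub_eq_zero]
    obtain ⟨v | v, -, rfl⟩ := Finset.mem_map.mp hx
    · exact subspacePoly_eval_add_of_mem a v.2
    · exact (subspacePoly_eval_add_of_mem b v.2).trans h.symm
  have := card_le_degree_of_subset_roots hroots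
  simp only [card_map, card_univ, Fintype.card_sum, hdeg] at this
  have := Fintype.card_pos (α := V)
  omega

variable {ζ : K}

lemma subspacePoly_eval_pow_add_ne {N : ℕ} (hN : 0 < N) {a b : K} (hab : a - b ∉ V) :
    (fun k : Fin N => (subspacePoly V).eval (ζ ^ (k : ℕ) + a)) ≠
      fun k : Fin N => (subspacePoly V).eval (ζ ^ (k : ℕ) + b) := fun h =>
  hab (by simpa using subspacePoly_eval_eq_iff.mp (congrFun h ⟨0, hN⟩))

lemma card_filter_subspacePoly_eval_eq_le {N τ : ℕ} (hζ : IsPrimitiveRoot ζ N) (hτ : τ < N)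
    {a b : K} (h : a - b ∉ V ∨ 0 < τ) :
    ((range N).filter fun k =>
      (subspacePoly V).eval (ζ ^ k + a) = (subspacePoly V).eval (ζ ^ ((k + τ) % N) + b)).card
        ≤ Fintype.card V := by
  have hmod (n : ℕ) : ζ ^ (n % N) = ζ ^ n := by rw [hζ.eq_orderOf, pow_mod_orderOf]
  rcases Nat.eq_zero_or_pos τ with rfl | hτ0
  · refine (card_eq_zero.mpr (filter_eq_empty_iff.mpr fun k _ heq => ?_)).trans_le (Nat.zero_le _)
    rw [add_zero, hmod, subspacePoly_eval_eq_iff, add_sub_add_left_eq_sub] at heq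
    exact h.resolve_right (lt_irrefl 0) heq
  have hu : 1 - ζ ^ τ ≠ 0 := sub_ne_zero.mpr (hζ.pow_ne_one_of_pos_of_lt hτ0.ne' hτ).symm
  calc _ ≤ (univ.map (Function.Embedding.subtype (· ∈ V))).card := by
        refine card_le_card_of_injOn (fun k => ζ ^ k * (1 - ζ ^ τ) + (a - b)) (fun k hk => ?_)
          fun k hk k' hk' hkk' => hζ.pow_inj ?_ ?_ (mul_right_cancel₀ hu (add_right_cancel hkk'))
        · simp only [coe_filter, mem_range, Set.mem_ofPred_eq] at hk
          rw [hmod, subspacePoly_eval_eq_iff] at hk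
          have hmem : ζ ^ k * (1 - ζ ^ τ) + (a - b) ∈ V := by
            convert hk.2 using 1
            ring
          simpa using hmem
        · exact mem_range.mp (mem_filter.mp hk).1
        · exact mem_range.mp (mem_filter.mp hk').1
    _ = Fintype.card V := by simp

lemma ncard_range_subspacePoly_eval {ι : Type*} [Fintype ι] [Nontrivial ι]
    (hζ : IsPrimitiveRoot ζ (Fintype.card K - 1)) {α : ι → K}
    (hsep : ∀ i j, α i - α j ∈ V → i = j) (hcover : ∀ x, ∃ i, x - α i ∈ V) :
    (Set.range fun p : ι × Fin (Fintype.card K - 1) =>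
      (subspacePoly V).eval (ζ ^ (p.2 : ℕ) + α p.1)).ncard = Fintype.card ι := by
  have hrange : (Set.range fun p : ι × Fin (Fintype.card K - 1) =>
      (subspacePoly V).eval (ζ ^ (p.2 : ℕ) + α p.1)) =
      Set.range fun i => (subspacePoly V).eval (α i) := by
    refine Set.Subset.antisymm ?_ ?_
    · rintro _ ⟨⟨i, k⟩, rfl⟩
      obtain ⟨j, hj⟩ := hcover (ζ ^ (k : ℕ) + α i)
      exact ⟨j, (subspacePoly_eval_eq_of_sub_mem hj).symm⟩
    · rintro _ ⟨i, rfl⟩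
      obtain ⟨j, hji⟩ := exists_ne i
      have hne : α i - α j ≠ 0 := fun h => hji (hsep i j (h ▸ V.zero_mem)).symm
      obtain ⟨k, hk, hζk⟩ := hζ.exists_pow_eq_of_ne_zero hne
      exact ⟨(j, ⟨k, hk⟩), by simp [hζk]⟩
  have hinj : Function.Injective fun i => (subspacePoly V).eval (α i) :=
    fun i j h => hsep i j (subspacePoly_eval_eq_iff.mp h)
  rw [hrange, ← Set.image_univ, Set.ncard_image_of_injective _ hinj, Set.ncard_univ,
    Nat.card_eq_fintype_card]

end SubspacePoly

section Coset

variable {R K : Type*} [Ring R] [AddCommGroup K] [Module R K] {V : Submodule R K}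

lemma coset_eq_of_sub_mem {a b : K} (h : a - b ∈ V) :
    coset (V : Set K) a = coset (V : Set K) b := by
  ext x
  constructor
  · rintro ⟨v, hv, rfl⟩
    exact ⟨a - b + v, V.add_mem h hv, by abel⟩
  · rintro ⟨v, hv, rfl⟩
    exact ⟨b - a + v, V.add_mem (by simpa using V.neg_mem h) hv, by abel⟩

lemma sub_mem_of_mem_coset {a x : K} (h : x ∈ coset (V : Set K) a) : x - a ∈ V := by
  obtain ⟨v, hv, rfl⟩ := h
  simpa using hv

end Coset

theorem stmt8_general (q m t : ℕ) (hq : IsPrimePow q) (hm : 1 ≤ m) (ht : t ≤ m - 1)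
    (Fq K : Type*) [Field Fq] [Fintype Fq] [Field K] [Fintype K] [Algebra Fq K]
    (hcq : Fintype.card Fq = q) (hcK : Fintype.card K = q ^ m)
    (V : Submodule Fq K) (hV : Module.finrank Fq V = t)
    (θ : Kˣ) (hθ : ∀ x : Kˣ, x ∈ Subgroup.zpowers θ)
    (α : Fin (q ^ (m - t)) → K)
    (hdist : ∀ i j : Fin (q ^ (m - t)), i ≠ j →
      coset (V : Set K) (α i) ≠ coset (V : Set K) (α j))
    (hcover : (⋃ i, coset (V : Set K) (α i)) = Set.univ) :
    (∀ i j : Fin (q ^ (m - t)), i ≠ j →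
      (fun k : Fin (q ^ m - 1) => (∏ β : V, (X + C (β : K))).eval (((θ : Kˣ) : K) ^ (k : ℕ) + α i)) ≠
      (fun k : Fin (q ^ m - 1) => (∏ β : V, (X + C (β : K))).eval (((θ : Kˣ) : K) ^ (k : ℕ) + α j))) ∧
    (Set.range (fun p : Fin (q ^ (m - t)) × Fin (q ^ m - 1) =>
      (∏ β : V, (X + C (β : K))).eval (((θ : Kˣ) : K) ^ ((p.2 : ℕ)) + α p.1))).ncard
        = q ^ (m - t) ∧
    (∀ i j : Fin (q ^ (m - t)), ∀ τ : ℕ, τ < q ^ m - 1 → (i ≠ j ∨ 1 ≤ τ) →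
      ((Finset.range (q ^ m - 1)).filter (fun k =>
        (∏ β : V, (X + C (β : K))).eval (((θ : Kˣ) : K) ^ k + α i) =
        (∏ β : V, (X + C (β : K))).eval (((θ : Kˣ) : K) ^ ((k + τ) % (q ^ m - 1)) + α j))).card
          ≤ q ^ t) := by
  have hsep : ∀ i j, α i - α j ∈ V → i = j := fun i j h =>
    of_not_not fun hij => hdist i j hij (coset_eq_of_sub_mem h)
  have hrep : ∀ x, ∃ i, x - α i ∈ V := fun x => by
    obtain ⟨i, hi⟩ := Set.mem_iUnion.mp (hcover ▸ Set.mem_univ x)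
    exact ⟨i, sub_mem_of_mem_coset hi⟩
  have hVcard : Fintype.card V = q ^ t := by
    rw [Module.card_eq_pow_finrank (K := Fq), hcq, hV]
  have : Nontrivial (Fin (q ^ (m - t))) :=
    Fin.nontrivial_iff_two_le.mpr (hq.two_le.trans (Nat.le_self_pow (by omega) q))
  have hθprim := isPrimitiveRoot_of_forall_mem_zpowers hθ
  rw [← hcK, ← hVcard]
  refine ⟨fun i j hij => ?_, ?_, fun i j τ hτ hij => ?_⟩
  · exact subspacePoly_eval_pow_add_ne (by have := Fintype.one_lt_card (α := K); omega)
      fun h => hij (hsep i j h)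
  · simpa using ncard_range_subspacePoly_eval hθprim hsep hrep
  · exact card_filter_subspacePoly_eval_eq_le hθprim hτ
      (hij.imp (fun hij h => hij (hsep i j h)) id)

/-- the `r = 1` (`G = {1}`) case: with `φ(x) = ∏_{β ∈ V}(x+β)` and coset
representatives `α_1 = 0, …, α_{q^{m-t}}`, one gets `q^{m-t}` pairwise distinct
sequences of length `q^m - 1` over an alphabet of size `q^{m-t}`, with maximum
Hamming correlation at most `q^t`. -/
theorem stmt8 (q m t : ℕ) (hq : IsPrimePow q) (hm : 1 ≤ m) (ht : t ≤ m - 1)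
    (Fq K : Type*) [Field Fq] [Fintype Fq] [Field K] [Fintype K] [Algebra Fq K]
    (hcq : Fintype.card Fq = q) (hcK : Fintype.card K = q ^ m)
    (V : Submodule Fq K) (hV : Module.finrank Fq V = t)
    (θ : Kˣ) (hθ : ∀ x : Kˣ, x ∈ Subgroup.zpowers θ)
    (hpos : 0 < q ^ (m - t))
    (α : Fin (q ^ (m - t)) → K) (hα0 : α ⟨0, hpos⟩ = 0)
    (hdist : ∀ i j : Fin (q ^ (m - t)), i ≠ j →
      coset (V : Set K) (α i) ≠ coset (V : Set K) (α j))
    (hcover : (⋃ i, coset (V : Set K) (α i)) = Set.univ) :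
    (∀ i j : Fin (q ^ (m - t)), i ≠ j →
      (fun k : Fin (q ^ m - 1) => (∏ β : V, (X + C (β : K))).eval (((θ : Kˣ) : K) ^ (k : ℕ) + α i)) ≠
      (fun k : Fin (q ^ m - 1) => (∏ β : V, (X + C (β : K))).eval (((θ : Kˣ) : K) ^ (k : ℕ) + α j))) ∧
    (Set.range (fun p : Fin (q ^ (m - t)) × Fin (q ^ m - 1) =>
      (∏ β : V, (X + C (β : K))).eval (((θ : Kˣ) : K) ^ ((p.2 : ℕ)) + α p.1))).ncard
        = q ^ (m - t) ∧
    (∀ i j : Fin (q ^ (m - t)), ∀ τ : ℕ, τ < q ^ m - 1 → (i ≠ j ∨ 1 ≤ τ) →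
      ((Finset.range (q ^ m - 1)).filter (fun k =>
        (∏ β : V, (X + C (β : K))).eval (((θ : Kˣ) : K) ^ k + α i) =
        (∏ β : V, (X + C (β : K))).eval (((θ : Kˣ) : K) ^ ((k + τ) % (q ^ m - 1)) + α j))).card
          ≤ q ^ t) :=
  stmt8_general q m t hq hm ht Fq K hcq hcK V hV θ hθ α hdist hcover
end

section
/- Let θ be a generator of F_{q^m}^* with m·t as above, G ≤ F_q^* of order r ≥ 2, and suppose θ^τ ∈ G for some 1 ≤ τ ≤ q^m − 2. If additionally φ(x + α θ^{-τ}) = φ(x + α) as polynomials, where α ∉ V and φ(x) = ∏_{g∈G}∏_{β∈V}(x+g+β), then θ^τ = 1 — contradiction; hence no such τ exists. Equivalently: for α ∉ V and u ∈ F_q^* with u ≠ 1, the polynomials φ(x + αu) and φ(x + α) are distinct. -/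
/-!
If `φ(x + αu) = φ(x + α)`, then `φ` is invariant under translation by `c = (u - 1)α`, so its root
set `-(G + V)` is too. In `K ⧸ V` this makes the image `T` of `G` a finite set stable under
translation by `c̄`, and summing over `T` gives `|T| • c̄ = 0`. Since `G ⊆ F_q`, the projection
`F_q → K ⧸ V` is either zero or injective, so `|T|` is `1` or `r`, both units of `F_q` because
`r ∣ q - 1`. Hence `c ∈ V`, and `α ∈ V` as `u - 1 ≠ 0`.
-/

open Polynomial Finset
open scoped Classical

theorem Finset.card_nsmul_eq_zero_of_add_mem {M : Type*} [AddCommGroup M] {T : Finset M} {c : M}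
    (hT : ∀ t ∈ T, t + c ∈ T) : #T • c = 0 := by
  have himage : T.image (· + c) = T := eq_of_subset_of_card_le (image_subset_iff.2 hT)
    (card_image_of_injective _ (add_left_injective c)).ge
  have hsum : ∑ t ∈ T, (t + c) = ∑ t ∈ T, t := by
    conv_rhs => rw [← himage]
    rw [sum_image fun x _ y _ => (add_left_injective c ·)]
  rwa [sum_add_distrib, sum_const, add_eq_left] at hsum

theorem FiniteField.natCast_ne_zero_of_dvd_card_sub_one {F : Type*} [Field F] [Fintype F] {r : ℕ}
    (hr : r ∣ Fintype.card F - 1) : (r : F) ≠ 0 := by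
  intro h
  obtain ⟨k, hk⟩ := hr
  have hcast : ((Fintype.card F - 1 : ℕ) : F) = -1 := by
    rw [Nat.cast_sub Fintype.card_pos, FiniteField.cast_card_eq_zero, Nat.cast_one, zero_sub]
  rw [hk, Nat.cast_mul, h, zero_mul] at hcast
  exact zero_ne_one (neg_eq_zero.1 hcast.symm).symm

section phiPoly

variable {Fq K : Type*} [Field Fq] [Field K] [Fintype K] [Algebra Fq K]
  {G : Subgroup Kˣ} {V : Submodule Fq K}

theorem eval_phiPoly_eq_zero_iff (z : K) :
    (phiPoly G V).eval z = 0 ↔ ∃ g : G, ∃ β : V, z + ((g : Kˣ) : K) + β = 0 := by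
  simp [phiPoly, eval_prod, prod_eq_zero_iff]

theorem exists_add_sub_mem_of_eval_phiPoly_add_eq {c : K}
    (hc : ∀ y, (phiPoly G V).eval (y + c) = (phiPoly G V).eval y) (g : G) :
    ∃ g' : G, ((g : Kˣ) : K) + c - ((g' : Kˣ) : K) ∈ V := by
  have hroot : (phiPoly G V).eval (-((g : Kˣ) : K)) = 0 :=
    (eval_phiPoly_eq_zero_iff _).2 ⟨g, 0, by simp⟩
  rw [← neg_add_cancel_right (-((g : Kˣ) : K)) c, hc, eval_phiPoly_eq_zero_iff] at hroot
  obtain ⟨g', β, hβ⟩ := hroot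
  refine ⟨g', ?_⟩
  convert β.2 using 1
  linear_combination -hβ

noncomputable def imageMkQ (G : Subgroup Kˣ) (V : Submodule Fq K) : Finset (K ⧸ V) :=
  univ.image fun g : G => V.mkQ ((g : Kˣ) : K)

theorem natCast_card_imageMkQ_ne_zero
    (hGsub : ∀ g : G, ∃ a : Fq, algebraMap Fq K a = ((g : Kˣ) : K))
    (hG : (Nat.card G : Fq) ≠ 0) : (#(imageMkQ G V) : Fq) ≠ 0 := by
  by_cases h1 : (1 : K) ∈ V
  · have hzero : ∀ g : G, V.mkQ ((g : Kˣ) : K) = 0 := fun g => by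
      obtain ⟨x, hx⟩ := hGsub g
      rw [← hx, Algebra.algebraMap_eq_smul_one, LinearMap.map_smul, Submodule.mkQ_apply,
        (Submodule.Quotient.mk_eq_zero V).2 h1, smul_zero]
    rw [imageMkQ, funext hzero, image_const univ_nonempty, card_singleton, Nat.cast_one]
    exact one_ne_zero
  · have hinj : Function.Injective fun g : G => V.mkQ ((g : Kˣ) : K) := fun g g' hgg' => by
      obtain ⟨x, hx⟩ := hGsub g
      obtain ⟨x', hx'⟩ := hGsub g'
      have hsub : (x - x') • (1 : K) ∈ V := by
        rw [sub_smul, ← Algebra.algebraMap_eq_smul_one, ← Algebra.algebraMap_eq_smul_one, hx, hx']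
        exact (Submodule.Quotient.eq V).1 hgg'
      have hxx' : x = x' := by
        by_contra hne
        exact h1 ((Submodule.smul_mem_iff V (sub_ne_zero.2 hne)).1 hsub)
      exact Subtype.ext (Units.ext (by rw [← hx, ← hx', hxx']))
    rwa [imageMkQ, card_image_of_injective _ hinj, card_univ, ← Nat.card_eq_fintype_card]

theorem mem_of_eval_phiPoly_add_eq
    (hGsub : ∀ g : G, ∃ a : Fq, algebraMap Fq K a = ((g : Kˣ) : K))
    (hG : (Nat.card G : Fq) ≠ 0) {c : K}
    (hc : ∀ y, (phiPoly G V).eval (y + c) = (phiPoly G V).eval y) : c ∈ V := by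
  have hstable : ∀ t ∈ imageMkQ G V, t + V.mkQ c ∈ imageMkQ G V := by
    simp only [imageMkQ, mem_image, mem_univ, true_and]
    rintro _ ⟨g, rfl⟩
    obtain ⟨g', hg'⟩ := exists_add_sub_mem_of_eval_phiPoly_add_eq hc g
    exact ⟨g', ((Submodule.Quotient.eq V).2 hg').symm.trans (map_add V.mkQ _ _)⟩
  have hnsmul := card_nsmul_eq_zero_of_add_mem hstable
  rw [← Nat.cast_smul_eq_nsmul Fq, smul_eq_zero] at hnsmul
  simpa using hnsmul.resolve_left (natCast_card_imageMkQ_ne_zero hGsub hG)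

end phiPoly

theorem stmt18_general (q r : ℕ)
    (hr : r ∣ q - 1)
    (Fq K : Type*) [Field Fq] [Fintype Fq] [Field K] [Fintype K] [Algebra Fq K]
    (hcq : Fintype.card Fq = q)
    (V : Submodule Fq K)
    (G : Subgroup Kˣ) (hG : Nat.card G = r)
    (hGsub : ∀ g : G, ∃ a : Fq, algebraMap Fq K a = ((g : Kˣ) : K))
    (a : K) (ha : a ∉ V) (u : Fq) (hu1 : u ≠ 1) :
    (phiPoly G V).comp (X + C (a * algebraMap Fq K u)) ≠
    (phiPoly G V).comp (X + C a) := by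
  intro h
  have hinv : ∀ y, (phiPoly G V).eval (y + (u - 1) • a) = (phiPoly G V).eval y := fun y => by
    have := congrArg (eval (y - a)) h
    have hshift : y - a + a * algebraMap Fq K u = y + (u - 1) • a := by
      rw [Algebra.smul_def, map_sub, map_one]
      ring
    simpa only [eval_comp, eval_add, eval_X, eval_C, hshift, sub_add_cancel] using this
  have hGFq : (Nat.card G : Fq) ≠ 0 :=
    hG ▸ FiniteField.natCast_ne_zero_of_dvd_card_sub_one (hcq ▸ hr)
  exact ha ((Submodule.smul_mem_iff V (sub_ne_zero.2 hu1)).1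
    (mem_of_eval_phiPoly_add_eq hGsub hGFq hinv))

/-- for `α ∉ V` and `u ∈ F_q^*` with `u ≠ 1`, the polynomials
`φ(x + α u)` and `φ(x + α)` are distinct. -/
theorem stmt18 (q r m t : ℕ) (hq : IsPrimePow q) (hm : 1 ≤ m) (ht : t ≤ m - 1)
    (hr : r ∣ q - 1)
    (Fq K : Type*) [Field Fq] [Fintype Fq] [Field K] [Fintype K] [Algebra Fq K]
    (hcq : Fintype.card Fq = q) (hcK : Fintype.card K = q ^ m)
    (V : Submodule Fq K) (hV : Module.finrank Fq V = t)
    (G : Subgroup Kˣ) (hG : Nat.card G = r)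
    (hGsub : ∀ g : G, ∃ a : Fq, algebraMap Fq K a = ((g : Kˣ) : K))
    (hr2 : 2 ≤ r)
    (a : K) (ha : a ∉ V) (u : Fq) (hu0 : u ≠ 0) (hu1 : u ≠ 1) :
    (phiPoly G V).comp (X + C (a * algebraMap Fq K u)) ≠
    (phiPoly G V).comp (X + C a) :=
  stmt18_general q r hr Fq K hcq V G hG hGsub a ha u hu1
end
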